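/- Let X be a real random variable with E[X] = 0 and E|X|^{1+ε} < ∞ for some ε ∈ (0, 1). Let δ ∈ (0, 1), u > 0, γ > 0, and set θ = γ/u^{1-δ}. If E|X|^{1+ε}/u^{(1-δ)(1+ε)} ≤ 1/2, then E[exp(θX) | X ≤ u^{1-δ}] ≤ exp(A/u^{(1-δ)(1+ε)}) with A = ((γ²/2)·(e^γ/(1-ε)) + 2)·E|X|^{1+ε}. -/

import Mathlib

/-!
Put `M = u^{1-δ}` and `Y = X / M`, so that `θ X = γ Y` and the truncation is `Y ≤ 1`. Taylor's
formula with the remainder bounded by `e^γ` gives `e^{γy} ≤ 1 + γy + K |y|^{1+ε}` with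
`K = γ² e^γ / 2 + 2` for `-1 ≤ y ≤ 1`, and for `y < -1` the same bound holds because `e^{γy} ≤ 1`
and `γ ≤ K`. Integrating over `{Y ≤ 1}`, the linear term is `≤ 0` (the mean is zero and `Y > 0`
off the truncation set), and `∫_{Y ≤ 1} |Y|^{1+ε} ≤ p - P(Y > 1)` with `p = E|Y|^{1+ε} ≤ 1`.
Dividing by `s = P(Y ≤ 1)` gives `E[e^{γY} | Y ≤ 1] ≤ 1 + K (p - 1 + s)/s ≤ 1 + K p ≤ e^{K p}`.
-/

open MeasureTheory ProbabilityTheory Set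

namespace Real

theorem exp_le_one_add_add_sq_div_two_of_nonpos {y : ℝ} (hy : y ≤ 0) :
    exp y ≤ 1 + y + y ^ 2 / 2 := by
  let f : ℝ → ℝ := fun t => exp t - (1 + t + t ^ 2 / 2)
  have hf : ∀ t, HasDerivAt f (exp t - (1 + t)) t := fun t => by
    refine ((hasDerivAt_exp t).sub (((hasDerivAt_id t).const_add 1).add
      ((hasDerivAt_pow 2 t).div_const 2))).congr_deriv ?_
    push_cast; ring
  have hmono : Monotone f := monotone_of_deriv_nonneg (fun t => (hf t).differentiableAt)
    fun t => by rw [(hf t).deriv]; linarith [add_one_le_exp t]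
  have := hmono hy
  simp only [f, exp_zero] at this
  linarith

theorem exp_le_one_add_add_sq_div_two_mul_exp_of_nonneg {y : ℝ} (hy : 0 ≤ y) :
    exp y ≤ 1 + y + y ^ 2 / 2 * exp y := by
  -- equivalently `1 ≤ (1 + y) e^{-y} + y²/2`, whose left side is monotone
  let g : ℝ → ℝ := fun t => (1 + t) * exp (-t) + t ^ 2 / 2
  have hg : ∀ t, HasDerivAt g (t * (1 - exp (-t))) t := fun t => by
    refine ((((hasDerivAt_id t).const_add 1).mul ((hasDerivAt_exp (-t)).comp t
      (hasDerivAt_neg t))).add ((hasDerivAt_pow 2 t).div_const 2)).congr_deriv ?_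
    simp only [Function.comp_apply, id]; push_cast; ring
  have hmono : Monotone g := monotone_of_deriv_nonneg (fun t => (hg t).differentiableAt)
    fun t => by
      rw [(hg t).deriv]
      rcases le_total 0 t with ht | ht
      · exact mul_nonneg ht (sub_nonneg.2 (exp_le_one_iff.2 (by linarith)))
      · exact mul_nonneg_of_nonpos_of_nonpos ht (sub_nonpos.2 (one_le_exp (by linarith)))
  have := hmono hy
  simp only [g, neg_zero, exp_zero] at this
  have hinv : exp y * exp (-y) = 1 := by rw [← exp_add, add_neg_cancel, exp_zero]
  nlinarith [exp_pos y]

theorem exp_le_one_add_add_sq_div_two_mul_exp_of_le {y c : ℝ} (hc : 0 ≤ c) (hy : y ≤ c) :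
    exp y ≤ 1 + y + y ^ 2 / 2 * exp c := by
  rcases le_total y 0 with hy0 | hy0
  · nlinarith [exp_le_one_add_add_sq_div_two_of_nonpos hy0, one_le_exp hc, sq_nonneg y]
  · nlinarith [exp_le_one_add_add_sq_div_two_mul_exp_of_nonneg hy0, exp_le_exp.2 hy, sq_nonneg y]

theorem exp_mul_le_one_add_mul_add_abs_rpow {γ ε x : ℝ} (hγ : 0 ≤ γ) (hε0 : 0 ≤ ε)
    (hε1 : ε ≤ 1) (hx : x ≤ 1) :
    exp (γ * x) ≤ 1 + γ * x + (γ ^ 2 * exp γ / 2 + 2) * |x| ^ (1 + ε) := by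
  have hpow_nonneg : 0 ≤ |x| ^ (1 + ε) := rpow_nonneg (abs_nonneg x) _
  rcases le_or_gt (-1) x with hx' | hx'
  · have hsq : x ^ 2 ≤ |x| ^ (1 + ε) := by
      rw [← sq_abs, ← rpow_natCast]
      exact rpow_le_rpow_of_exponent_ge' (abs_nonneg x) (abs_le.2 ⟨hx', hx⟩) (by linarith)
        (by norm_num; linarith)
    have hc : 0 ≤ γ ^ 2 * exp γ / 2 := by positivity
    calc exp (γ * x) ≤ 1 + γ * x + (γ * x) ^ 2 / 2 * exp γ :=
          exp_le_one_add_add_sq_div_two_mul_exp_of_le hγ (by nlinarith)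
      _ = 1 + γ * x + γ ^ 2 * exp γ / 2 * x ^ 2 := by ring
      _ ≤ 1 + γ * x + (γ ^ 2 * exp γ / 2 + 2) * |x| ^ (1 + ε) := by
          linarith [mul_le_mul_of_nonneg_left hsq hc]
  · have habs : |x| = -x := abs_of_neg (by linarith)
    have hself : |x| ≤ |x| ^ (1 + ε) := self_le_rpow_of_one_le (by linarith) (by linarith)
    have hγK : γ ≤ γ ^ 2 * exp γ / 2 + 2 := by
      nlinarith [sq_nonneg (γ - 1), mul_le_mul_of_nonneg_left (one_le_exp hγ) (sq_nonneg γ)]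
    have hexp : exp (γ * x) ≤ 1 := exp_le_one_iff.2 (by nlinarith)
    nlinarith [mul_le_mul hγK hself (abs_nonneg x) (by linarith)]

end Real

section TruncatedMoments

variable {Ω : Type*} [MeasurableSpace Ω] {P : Measure Ω} {Y : Ω → ℝ}

theorem setIntegral_nonpos_of_integral_nonpos (hY : Measurable Y) (hint : Integrable Y P)
    (hmean : ∫ ω, Y ω ∂P ≤ 0) {c : ℝ} (hc : 0 ≤ c) :
    ∫ ω in {ω | Y ω ≤ c}, Y ω ∂P ≤ 0 := by
  have hS : MeasurableSet {ω | Y ω ≤ c} := measurableSet_le hY measurable_const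
  have hcompl : 0 ≤ ∫ ω in {ω | Y ω ≤ c}ᶜ, Y ω ∂P :=
    setIntegral_nonneg hS.compl fun ω (hω : ¬Y ω ≤ c) => hc.trans (not_le.1 hω).le
  linarith [integral_add_compl hS hint]

theorem setIntegral_abs_rpow_le_sub_measureReal [IsProbabilityMeasure P] (hY : Measurable Y)
    {q : ℝ} (hq : 0 ≤ q) (hmom : Integrable (fun ω => |Y ω| ^ q) P) :
    ∫ ω in {ω | Y ω ≤ 1}, |Y ω| ^ q ∂P ≤
      ∫ ω, |Y ω| ^ q ∂P - (1 - P.real {ω | Y ω ≤ 1}) := by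
  have hS : MeasurableSet {ω | Y ω ≤ 1} := measurableSet_le hY measurable_const
  have htail : P.real {ω | Y ω ≤ 1}ᶜ ≤ ∫ ω in {ω | Y ω ≤ 1}ᶜ, |Y ω| ^ q ∂P := by
    have := setIntegral_mono_on (integrable_const (1 : ℝ)).integrableOn hmom.integrableOn
      hS.compl fun ω (hω : ¬Y ω ≤ 1) =>
        Real.one_le_rpow ((not_le.1 hω).le.trans (le_abs_self _)) hq
    simpa using this
  rw [measureReal_compl hS, probReal_univ] at htail
  linarith [integral_add_compl hS hmom]

theorem setIntegral_exp_mul_div_le_one_add [IsProbabilityMeasure P] (hY : Measurable Y)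
    (hint : Integrable Y P) (hmean : ∫ ω, Y ω ∂P ≤ 0) {γ ε : ℝ} (hγ : 0 ≤ γ) (hε0 : 0 ≤ ε)
    (hε1 : ε ≤ 1) (hmom : Integrable (fun ω => |Y ω| ^ (1 + ε)) P)
    (hmom_le : ∫ ω, |Y ω| ^ (1 + ε) ∂P ≤ 1) :
    (∫ ω in {ω | Y ω ≤ 1}, Real.exp (γ * Y ω) ∂P) / P.real {ω | Y ω ≤ 1} ≤
      1 + (γ ^ 2 * Real.exp γ / 2 + 2) * ∫ ω, |Y ω| ^ (1 + ε) ∂P := by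
  set S := {ω | Y ω ≤ 1}
  set K := γ ^ 2 * Real.exp γ / 2 + 2
  set p := ∫ ω, |Y ω| ^ (1 + ε) ∂P
  have hS : MeasurableSet S := measurableSet_le hY measurable_const
  have hK : 0 ≤ K := by positivity
  have hlin : Integrable (fun ω => 1 + γ * Y ω) P := (integrable_const 1).add (hint.const_mul γ)
  have hnum : ∫ ω in S, Real.exp (γ * Y ω) ∂P ≤ P.real S + K * (p - (1 - P.real S)) := by
    calc ∫ ω in S, Real.exp (γ * Y ω) ∂P
        ≤ ∫ ω in S, (1 + γ * Y ω + K * |Y ω| ^ (1 + ε)) ∂P :=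
          integral_mono_of_nonneg (ae_of_all _ fun ω => (Real.exp_pos _).le)
            (hlin.add (hmom.const_mul K)).integrableOn
            (ae_restrict_of_forall_mem hS fun ω hω =>
              Real.exp_mul_le_one_add_mul_add_abs_rpow hγ hε0 hε1 hω)
      _ = P.real S + γ * ∫ ω in S, Y ω ∂P + K * ∫ ω in S, |Y ω| ^ (1 + ε) ∂P := by
          rw [integral_add hlin.integrableOn (hmom.const_mul K).integrableOn,
            integral_add (integrable_const 1).integrableOn (hint.const_mul γ).integrableOn,
            setIntegral_const, integral_const_mul, integral_const_mul, smul_eq_mul, mul_one]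
      _ ≤ P.real S + K * (p - (1 - P.real S)) := by
          have hY_S := setIntegral_nonpos_of_integral_nonpos hY hint hmean zero_le_one
          have hmom_S := setIntegral_abs_rpow_le_sub_measureReal hY (by linarith) hmom
          linarith [mul_nonpos_of_nonneg_of_nonpos hγ hY_S, mul_le_mul_of_nonneg_left hmom_S hK]
  rcases (measureReal_nonneg : 0 ≤ P.real S).eq_or_lt with hs | hs
  · rw [← hs, div_zero]; positivity
  rw [div_le_iff₀ hs]
  have hs1 : P.real S ≤ 1 := measureReal_le_one
  linarith [mul_nonneg hK (mul_nonneg (sub_nonneg.2 hmom_le) (sub_nonneg.2 hs1))]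

end TruncatedMoments

theorem truncated_tilted_mgf_bound_eps_moment_general
    {Ω : Type*} [MeasurableSpace Ω] (P : Measure Ω) [IsProbabilityMeasure P]
    (X : Ω → ℝ) (hX : Measurable X)
    (hint : Integrable X P) (hmean : ∫ ω, X ω ∂P = 0)
    (ε : ℝ) (hε0 : 0 < ε) (hε1 : ε < 1)
    (hmom : Integrable (fun ω => |X ω| ^ (1 + ε)) P)
    (δ u γ θ : ℝ) (hu : 0 < u) (hγ : 0 < γ)
    (hθ : θ = γ / u ^ (1 - δ))
    (hhalf : (∫ ω, |X ω| ^ (1 + ε) ∂P) / u ^ ((1 - δ) * (1 + ε)) ≤ 1 / 2) :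
    (∫ ω in {ω | X ω ≤ u ^ (1 - δ)}, Real.exp (θ * X ω) ∂P) /
        (P {ω | X ω ≤ u ^ (1 - δ)}).toReal ≤
      Real.exp ((((γ ^ 2 / 2) * (Real.exp γ / (1 - ε)) + 2) *
          ∫ ω, |X ω| ^ (1 + ε) ∂P) / u ^ ((1 - δ) * (1 + ε))) := by
  subst hθ
  set M := u ^ (1 - δ)
  have hM : 0 < M := Real.rpow_pos_of_pos hu _
  set Y : Ω → ℝ := fun ω => X ω / M
  have hmomY : (fun ω => |Y ω| ^ (1 + ε)) =
      fun ω => |X ω| ^ (1 + ε) / u ^ ((1 - δ) * (1 + ε)) := by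
    ext ω
    rw [abs_div, abs_of_pos hM, Real.div_rpow (abs_nonneg _) hM.le, ← Real.rpow_mul hu.le]
  have hp : ∫ ω, |Y ω| ^ (1 + ε) ∂P =
      (∫ ω, |X ω| ^ (1 + ε) ∂P) / u ^ ((1 - δ) * (1 + ε)) := by
    rw [hmomY, integral_div]
  have hset : {ω | X ω ≤ M} = {ω | Y ω ≤ 1} := by ext ω; simp [Y, div_le_one hM]
  have hexp : (fun ω => Real.exp (γ / M * X ω)) = fun ω => Real.exp (γ * Y ω) := by
    simp only [Y, div_mul_eq_mul_div, mul_div_assoc]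
  have hK : γ ^ 2 * Real.exp γ / 2 + 2 ≤ γ ^ 2 / 2 * (Real.exp γ / (1 - ε)) + 2 := by
    have := le_div_self (Real.exp_pos γ).le (sub_pos.2 hε1) (by linarith)
    nlinarith [sq_nonneg γ]
  rw [hset, hexp, ← measureReal_def, mul_div_assoc, ← hp]
  calc _ ≤ 1 + (γ ^ 2 * Real.exp γ / 2 + 2) * ∫ ω, |Y ω| ^ (1 + ε) ∂P :=
        setIntegral_exp_mul_div_le_one_add (hX.div_const M) (hint.div_const M)
          (by rw [integral_div, hmean, zero_div]) hγ.le hε0.le hε1.le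
          (by rw [hmomY]; exact hmom.div_const _) (by linarith)
    _ ≤ Real.exp ((γ ^ 2 * Real.exp γ / 2 + 2) * ∫ ω, |Y ω| ^ (1 + ε) ∂P) :=
        (add_comm _ _).trans_le (Real.add_one_le_exp _)
    _ ≤ _ := by gcongr

/-- truncated-tilted mgf bound, `1+ε` moments: if `E X = 0`,
`E|X|^{1+ε} < ∞` and `E|X|^{1+ε}/u^{(1-δ)(1+ε)} ≤ 1/2`, then with `θ = γ/u^{1-δ}`,
`E[exp(θX) | X ≤ u^{1-δ}] ≤ exp(A/u^{(1-δ)(1+ε)})` where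
`A = ((γ²/2)·(e^γ/(1-ε)) + 2)·E|X|^{1+ε}`. -/
theorem truncated_tilted_mgf_bound_eps_moment
    {Ω : Type*} [MeasurableSpace Ω] (P : Measure Ω) [IsProbabilityMeasure P]
    (X : Ω → ℝ) (hX : Measurable X)
    (hint : Integrable X P) (hmean : ∫ ω, X ω ∂P = 0)
    (ε : ℝ) (hε0 : 0 < ε) (hε1 : ε < 1)
    (hmom : Integrable (fun ω => |X ω| ^ (1 + ε)) P)
    (δ u γ θ : ℝ) (hδ0 : 0 < δ) (hδ1 : δ < 1) (hu : 0 < u) (hγ : 0 < γ)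
    (hθ : θ = γ / u ^ (1 - δ))
    (hhalf : (∫ ω, |X ω| ^ (1 + ε) ∂P) / u ^ ((1 - δ) * (1 + ε)) ≤ 1 / 2) :
    (∫ ω in {ω | X ω ≤ u ^ (1 - δ)}, Real.exp (θ * X ω) ∂P) /
        (P {ω | X ω ≤ u ^ (1 - δ)}).toReal ≤
      Real.exp ((((γ ^ 2 / 2) * (Real.exp γ / (1 - ε)) + 2) *
          ∫ ω, |X ω| ^ (1 + ε) ∂P) / u ^ ((1 - δ) * (1 + ε))) :=
  truncated_tilted_mgf_bound_eps_moment_general P X hX hint hmean ε hε0 hε1 hmom δ u γ θ hu hγ hθ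
    hhalf
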